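/- For every k ≥ 1 and every strongly Σₖᵖ-immune set A: the disjoint union A ⊕ A = {x0 : x ∈ A} ∪ {x1 : x ∈ A} is infinite and h-P-m-reducible to A, but A ⊕ A is not strongly Σₖᵖ-immune. Consequently, if a strongly Σₖᵖ-immune set exists, then the class of all strongly Σₖᵖ-immune sets is not closed downward under h-P-m-reductions on infinite sets. -/

import Mathlib

/-! Common definitions for resource-bounded immunity and simplicity. -/

open Computability Turing

/-- Binary strings. -/
abbrev Str : Type := List Bool

/-- Self-delimiting encoding of a single string (double each bit, end marker `[false, true]`). -/
def encStr (x : Str) : Str := (x.map fun b => [b, b]).foldr (· ++ ·) [] ++ [false, true]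

/-- A fixed polynomial-time computable and invertible encoding of finite tuples of strings. -/
def encodeTuple (l : List Str) : Str := (l.map encStr).foldr (· ++ ·) []

/-- The identity `FinEncoding` of binary strings over alphabet `Bool`. -/
def strEnc : Computability.Encoding Str Bool where
  encode := id
  decode := fun l => some l
  decode_encode := fun _ => rfl

/-- Encoding of `Bool`. -/
def boolEnc : Computability.Encoding Bool Bool := Computability.encodingBoolBool

open scoped Classical in
/-- Characteristic function of a language. -/
noncomputable def chi (A : Set Str) (x : Str) : Bool := decide (x ∈ A)

/-- A language is in `P` if its characteristic function is computable in polynomial time. -/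
def InP (A : Set Str) : Prop := Nonempty (Turing.TM2ComputableInPolyTime strEnc.encode boolEnc.encode (chi A))

/-- `FP`: total string functions computable in polynomial time. -/
def FP (f : Str → Str) : Prop := Nonempty (Turing.TM2ComputableInPolyTime strEnc.encode strEnc.encode f)

/-- A (k+1)-ary relation on strings is polynomial-time decidable if some polynomial-time
computable function decides it on encoded tuples. -/
def PTimeRel (R : Str → List Str → Bool) : Prop :=
  ∃ g : Str → Bool, Nonempty (Turing.TM2ComputableInPolyTime strEnc.encode boolEnc.encode g) ∧
    ∀ x l, g (encodeTuple (x :: l)) = R x l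

/-- Alternating bounded quantifiers: `altSat k true m P` means
`∃ y₁ ∀ y₂ ⋯ Q y_k, P [y₁,…,y_k]` with all `|yᵢ| ≤ m`. -/
def altSat : ℕ → Bool → ℕ → (List Str → Prop) → Prop
  | 0, _, _, P => P []
  | k + 1, true, m, P => ∃ y : Str, y.length ≤ m ∧ altSat k false m (fun l => P (y :: l))
  | k + 1, false, m, P => ∀ y : Str, y.length ≤ m → altSat k true m (fun l => P (y :: l))

/-- The class `Σₖᵖ` of the polynomial hierarchy (`NP = SigmaP 1`). -/
def SigmaP (k : ℕ) : Set (Set Str) :=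
  {L | ∃ p : Polynomial ℕ, ∃ R : Str → List Str → Bool, PTimeRel R ∧
    ∀ x, x ∈ L ↔ altSat k true (p.eval x.length) (fun l => R x l = true)}

/-- `C`-immunity for an arbitrary class `C` of languages. -/
def Immune (C : Set (Set Str)) (S : Set Str) : Prop :=
  S.Infinite ∧ ∀ T, T ⊆ S → T ∈ C → T.Finite

/-- `Σₖᵖ`-immune sets. -/
def SigmaImmune (k : ℕ) (S : Set Str) : Prop := Immune (SigmaP k) S

/-- `Σₖᵖ`-simple sets. -/
def SigmaSimple (k : ℕ) (S : Set Str) : Prop := S ∈ SigmaP k ∧ SigmaImmune k Sᶜ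

/-- Polynomially bounded partial function. -/
def PolyBounded (f : Str → Option Str) : Prop :=
  ∃ p : Polynomial ℕ, ∀ x y, f x = some y → y.length ≤ p.eval x.length

/-- The graph of a partial function, as a set of encoded pairs. -/
def SVGraph (f : Str → Option Str) : Set Str :=
  {z | ∃ x y, f x = some y ∧ z = encodeTuple [x, y]}

/-- `ΣₖSV`: single-valued partial functions, polynomially bounded, with graph in `Σₖᵖ`. -/
def SigmaSV (k : ℕ) (f : Str → Option Str) : Prop :=
  PolyBounded f ∧ SVGraph f ∈ SigmaP k

/-- A `Σₖᵖ`-m-quasireduction from `A` to `B`. -/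
def QuasiRed (k : ℕ) (f : Str → Option Str) (A B : Set Str) : Prop :=
  SigmaSV k f ∧ {x | f x ≠ none}.Infinite ∧ ∀ x y, f x = some y → (x ∈ A ↔ y ∈ B)

/-- Order on strings: first by length, then lexicographically. -/
def StrLt (x y : Str) : Prop :=
  x.length < y.length ∨ (x.length = y.length ∧ List.Lex (· < ·) x y)

def StrLe (x y : Str) : Prop := StrLt x y ∨ x = y

/-- Strongly `Σₖᵖ`-immune sets: every quasireduction from `S` is almost one-to-one on `S`. -/
def StronglySigmaImmune (k : ℕ) (S : Set Str) : Prop :=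
  S.Infinite ∧ ∀ B : Set Str, ∀ f : Str → Option Str, QuasiRed k f S B →
    {p : Str × Str | p.1 ∈ S ∧ p.2 ∈ S ∧ f p.1 ≠ none ∧ f p.2 ≠ none ∧
      StrLt p.1 p.2 ∧ f p.1 = f p.2}.Finite

/-- Honest total function: `|x| ≤ p(|f(x)|)`. -/
def Honest (f : Str → Str) : Prop := ∃ p : Polynomial ℕ, ∀ x, x.length ≤ p.eval (f x).length

/-- Honest polynomial-time many-one reduction. -/
def HPmRed (A B : Set Str) : Prop :=
  ∃ f : Str → Str, FP f ∧ Honest f ∧ ∀ x, x ∈ A ↔ f x ∈ B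

/-- Honest injective polynomial-time many-one (1-) reduction. -/
def HP1Red (A B : Set Str) : Prop :=
  ∃ f : Str → Str, FP f ∧ Honest f ∧ Function.Injective f ∧ ∀ x, x ∈ A ↔ f x ∈ B

/-- The map `x ↦ ⟨F x⟩` is polynomial-time computable. -/
def TupleFP (F : Str → List Str) : Prop := FP (fun x => encodeTuple (F x))

/-- Componentwise honest tuple function. -/
def CwHonest (F : Str → List Str) : Prop :=
  ∃ p : Polynomial ℕ, ∀ x, ∀ y ∈ F x, x.length ≤ p.eval y.length

/-- Honest polynomial-time conjunctive reduction. -/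
def HPcRed (A B : Set Str) : Prop :=
  ∃ F : Str → List Str, TupleFP F ∧ (∀ x, F x ≠ []) ∧ CwHonest F ∧
    ∀ x, x ∈ A ↔ ∀ y ∈ F x, y ∈ B

/-- Honest polynomial-time disjunctive reduction. -/
def HPdRed (A B : Set Str) : Prop :=
  ∃ F : Str → List Str, TupleFP F ∧ (∀ x, F x ≠ []) ∧ CwHonest F ∧
    ∀ x, x ∈ A ↔ ∃ y ∈ F x, y ∈ B

/-! Forcing conditions and genericity. -/

/-- A forcing condition: a finite partial function from strings to bits, represented
canonically as a list of (string, value) pairs with strictly increasing keys. -/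
abbrev Cond : Type := List (Str × Bool)

/-- Well-formedness: the domain is listed in strictly increasing order. -/
def WFCond (σ : Cond) : Prop := List.Pairwise (fun a b => StrLt a.1 b.1) σ

/-- Encoding of a condition as a string: the list of its domain in increasing order
together with the corresponding values. -/
def encodeCond (σ : Cond) : Str :=
  encodeTuple [encodeTuple (σ.map Prod.fst), σ.map Prod.snd]

/-- `τ` extends `σ`. -/
def CondExt (σ τ : Cond) : Prop := ∀ p ∈ σ, p ∈ τ

/-- A set `A` extends a condition `σ`. -/
def SetExt (A : Set Str) (σ : Cond) : Prop := ∀ p ∈ σ, (p.1 ∈ A ↔ p.2 = true)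

/-- A set `S` of conditions is dense along `A`. -/
def DenseAlong (S : Set Cond) (A : Set Str) : Prop :=
  ∀ σ, WFCond σ → SetExt A σ → ∃ τ ∈ S, WFCond τ ∧ CondExt σ τ

/-- `A` meets a set `S` of conditions. -/
def Meets (A : Set Str) (S : Set Cond) : Prop := ∃ σ ∈ S, WFCond σ ∧ SetExt A σ

/-- `Σₖᵖ`-generic sets. -/
def SigmaGeneric (k : ℕ) (A : Set Str) : Prop :=
  ∀ S : Set Cond, {z | ∃ σ ∈ S, WFCond σ ∧ z = encodeCond σ} ∈ SigmaP k →
    DenseAlong S A → Meets A S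

/-! Arrays and hyperimmunity. -/

/-- `(f, D)` is a `Σₖᵖ`-array: `f ∈ ΣₖSV` has infinite domain and, on its domain,
`f s` is the canonical encoding of the finite nonempty set `D s`
(listed in increasing order); off the domain, `D s = ∅`. -/
def IsSigmaArray (k : ℕ) (f : Str → Option Str) (D : Str → List Str) : Prop :=
  SigmaSV k f ∧ {s | f s ≠ none}.Infinite ∧
    (∀ s, f s ≠ none →
      D s ≠ [] ∧ List.Pairwise StrLt (D s) ∧ f s = some (encodeTuple (D s))) ∧
    (∀ s, f s = none → D s = [])

/-- Honest array: componentwise honest supporting function. -/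
def ArrayHonest (f : Str → Option Str) (D : Str → List Str) : Prop :=
  ∃ q : Polynomial ℕ, ∀ s, f s ≠ none → ∀ x ∈ D s, s.length ≤ q.eval x.length

/-- Eventually disjoint array. -/
def ArrayEvDisjoint (f : Str → Option Str) (D : Str → List Str) : Prop :=
  ∀ x, f x ≠ none → ∃ y, f y ≠ none ∧ StrLe x y ∧ (∀ a ∈ D x, a ∉ D y) ∧
    (∀ a ∈ D x, ∀ b ∈ D y, StrLt a b)

/-- The array intersects `X`. -/
def ArrayIntersects (f : Str → Option Str) (D : Str → List Str) (X : Set Str) : Prop :=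
  ∀ s, f s ≠ none → ∃ x ∈ D s, x ∈ X

/-- Honestly `Σₖᵖ`-hyperimmune sets. -/
def HonestlySigmaHyperimmune (k : ℕ) (S : Set Str) : Prop :=
  S.Infinite ∧ ¬ ∃ f D, IsSigmaArray k f D ∧ ArrayHonest f D ∧
    ArrayEvDisjoint f D ∧ ArrayIntersects f D S

/-! Selectivity. -/

/-- Total functions in `ΣₖSV`. -/
def SigmaSVt (k : ℕ) (g : Str → Str) : Prop := SigmaSV k (fun x => some (g x))

/-- `ΣₖSVₜ`-selective sets. -/
def SVtSelective (k : ℕ) (S : Set Str) : Prop :=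
  ∃ f : Str → Str → Str,
    (∃ g : Str → Str, SigmaSVt k g ∧ ∀ x y, g (encodeTuple [x, y]) = f x y) ∧
    ∀ x y, (f x y = x ∨ f x y = y) ∧ (({x, y} : Set Str) ∩ S ≠ ∅ → f x y ∈ S)

/-- `P`-selective sets. -/
def PSelective (S : Set Str) : Prop :=
  ∃ f : Str → Str → Str,
    (∃ g : Str → Str, FP g ∧ ∀ x y, g (encodeTuple [x, y]) = f x y) ∧
    ∀ x y, (f x y = x ∨ f x y = y) ∧ (({x, y} : Set Str) ∩ S ≠ ∅ → f x y ∈ S)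

/-! Exponential and subexponential time. -/

/-- A language is in `EXP` if its characteristic function is computable
within time `2^(n^c + c)` for some `c`. -/
def InEXP (A : Set Str) : Prop :=
  ∃ c : ℕ, ∃ h : Turing.TM2ComputableInTime strEnc.encode boolEnc.encode (chi A),
    ∀ n, h.time n ≤ 2 ^ (n ^ c + c)

/-- A language is in `SUBEXP` if for every `c ≥ 1` its characteristic function is
computable within time `2^(n^(1/c))`. -/
def InSUBEXP (A : Set Str) : Prop :=
  ∀ c : ℕ, 1 ≤ c → ∃ h : Turing.TM2ComputableInTime strEnc.encode boolEnc.encode (chi A),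
    ∀ n, (h.time n : ℝ) ≤ 2 ^ ((n : ℝ) ^ (1 / (c : ℝ)))

/-- The alternating tower: `2̂₀ = 1`, `2̂_{n+1} = 2^(2^(2̂ₙ))`. -/
def towHat : ℕ → ℕ
  | 0 => 1
  | n + 1 => 2 ^ (2 ^ towHat n)

/-! Truth-table style reductions. -/

/-- Polynomial-time computability of a truth-table evaluator `α : Σ* × {0,1} → {0,1}`
(on encoded pairs). -/
def FPEval1 (α : Str → Bool → Bool) : Prop :=
  ∃ g : Str → Str, FP g ∧ ∀ x b, g (encodeTuple [x, [b]]) = [α x b]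

/-- Polynomial-time computability of `α : Σ* × {0,1}² → {0,1}` (on encoded tuples). -/
def FPEval2 (α : Str → Bool → Bool → Bool) : Prop :=
  ∃ g : Str → Str, FP g ∧ ∀ x b₁ b₂, g (encodeTuple [x, [b₁, b₂]]) = [α x b₁ b₂]

/-- `P`-1tt-reduction from `A` to `B` via `(f, α)`. -/
def P1ttRed (A B : Set Str) : Prop :=
  ∃ f : Str → Str, ∃ α : Str → Bool → Bool, FP f ∧ FPEval1 α ∧
    ∀ x, x ∈ A ↔ α x (chi B (f x)) = true

/-- Honest `P`-1tt-reduction. -/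
def HP1ttRed (A B : Set Str) : Prop :=
  ∃ f : Str → Str, ∃ α : Str → Bool → Bool, FP f ∧ FPEval1 α ∧ Honest f ∧
    ∀ x, x ∈ A ↔ α x (chi B (f x)) = true

/-! Almost immunity, levelability, and the operator `U`. -/

/-- Almost `C`-immune: union of a set in `C` and a `C`-immune set. -/
def AlmostImmune (C : Set (Set Str)) (S : Set Str) : Prop :=
  ∃ A ∈ C, ∃ B, Immune C B ∧ S = A ∪ B

/-- The class `P`. -/
def Pclass : Set (Set Str) := {A | InP A}

/-- `P`-levelable: infinite and not almost `P`-immune. -/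
def PLevelable (S : Set Str) : Prop := S.Infinite ∧ ¬ AlmostImmune Pclass S

/-- Almost `Σₖᵖ`-simple sets. -/
def AlmostSigmaSimple (k : ℕ) (S : Set Str) : Prop :=
  S.Infinite ∧ S ∈ SigmaP k ∧
    ∃ A ∈ SigmaP k, ∃ B, Immune (SigmaP k) B ∧ Sᶜ = A ∪ B ∧ (B \ A).Infinite

/-- `Σₖᵖ`-pseudosimple sets. -/
def SigmaPseudosimple (k : ℕ) (S : Set Str) : Prop :=
  ∃ A : Set Str, A.Infinite ∧ A ∈ SigmaP k ∧ A ⊆ Sᶜ ∧ SigmaSimple k (S ∪ A)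

/-- The unambiguity operator `U` on a class `C`. -/
def UClass (C : Set (Set Str)) : Set (Set Str) :=
  {A | ∃ f : Str → Option Str, PolyBounded f ∧ A = {x | f x ≠ none} ∧ SVGraph f ∈ C}

/-!
The partial map `z ↦ (reverse z).tail` sends `x0` and `x1` to the same string, and membership
of `z` in `A ⊕ A` depends only on `z.dropLast = reverse ((reverse z).tail)`. So it is a
quasireduction from `A ⊕ A` to `{y | reverse y ∈ A}` with infinitely many collisions on `A ⊕ A`.
Its graph is even in `P`: a stack machine pushes the bits of `z`, discards the top (the last bit
of `z`) and pops the rest against `y`, which is why the map reverses its argument.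

The same map shows that `Σ*` is not strongly immune, so a strongly immune `A` misses some string
`w`; sending `[]` to `w` and every other `z` to `z.dropLast` reduces `A ⊕ A` to `A` honestly.
-/

open Turing.TM2.Stmt StateTransition

def ReachesWithin {σ : Type*} (f : σ → Option σ) (n : ℕ) (a b : σ) : Prop :=
  Nonempty (EvalsToInTime f a (some b) n)

namespace ReachesWithin

variable {σ : Type*} {f : σ → Option σ} {n n' : ℕ} {a a' b : σ}

theorem refl (f : σ → Option σ) (n : ℕ) (a : σ) : ReachesWithin f n a a :=
  ⟨⟨EvalsTo.refl f a, Nat.zero_le n⟩⟩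

theorem mono (h : ReachesWithin f n a b) (hn : n ≤ n') : ReachesWithin f n' a b :=
  let ⟨e⟩ := h
  ⟨⟨e.toEvalsTo, e.steps_le_m.trans hn⟩⟩

theorem head (hstep : f a = some a') (h : ReachesWithin f n a' b) :
    ReachesWithin f (n + 1) a b :=
  let ⟨e⟩ := h
  ⟨EvalsToInTime.trans f 1 n a a' (some b) ⟨⟨1, hstep⟩, le_rfl⟩ e⟩

end ReachesWithin

/-- Programs for machines with three Boolean stacks (input `0`, work `1`, output `2`) and an
`Option Bool` register. -/
abbrev Stmt3 (Λ : Type) := TM2.Stmt (fun _ : Fin 3 => Bool) Λ (Option Bool)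

def stk3 (a b c : Str) : Fin 3 → Str := ![a, b, c]

@[simp] theorem stk3_zero (a b c : Str) : stk3 a b c 0 = a := rfl
@[simp] theorem stk3_one (a b c : Str) : stk3 a b c 1 = b := rfl
@[simp] theorem stk3_two (a b c : Str) : stk3 a b c 2 = c := rfl

@[simp] theorem update_stk3_zero (a b c x : Str) :
    Function.update (stk3 a b c) 0 x = stk3 x b c := by
  funext k; fin_cases k <;> rfl

@[simp] theorem update_stk3_one (a b c x : Str) :
    Function.update (stk3 a b c) 1 x = stk3 a x c := by
  funext k; fin_cases k <;> rfl

@[simp] theorem update_stk3_two (a b c x : Str) :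
    Function.update (stk3 a b c) 2 x = stk3 a b x := by
  funext k; fin_cases k <;> rfl

abbrev threeStackTM {Λ : Type} [Fintype Λ] (main : Λ) (m : Λ → Stmt3 Λ) : FinTM2 where
  K := Fin 3
  k₀ := 0
  k₁ := 2
  Γ := fun _ => Bool
  Λ := Λ
  main := main
  σ := Option Bool
  initialState := none
  m := m

section ThreeStack

variable {Λ : Type} [Fintype Λ] {main : Λ} {m : Λ → Stmt3 Λ}

theorem initList_threeStackTM (z : Str) :
    initList (threeStackTM main m) z = ⟨some main, none, stk3 z [] []⟩ := by
  refine TM2.Cfg.mk.injEq .. ▸ ⟨rfl, rfl, ?_⟩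
  funext (k : Fin 3)
  fin_cases k <;> rfl

theorem haltList_threeStackTM (z : Str) :
    haltList (threeStackTM main m) z = ⟨none, none, stk3 [] [] z⟩ := by
  refine TM2.Cfg.mk.injEq .. ▸ ⟨rfl, rfl, ?_⟩
  funext (k : Fin 3)
  fin_cases k <;> rfl

theorem nonempty_tm2ComputableInPolyTime_of_reachesWithin {β : Type} {eb : β → List Bool}
    {f : Str → β} (p : Polynomial ℕ)
    (h : ∀ z, ReachesWithin (threeStackTM main m).step (p.eval z.length)
      ⟨some main, none, stk3 z [] []⟩ ⟨none, none, stk3 [] [] (eb (f z))⟩) :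
    Nonempty (TM2ComputableInPolyTime strEnc.encode eb f) := by
  refine ⟨⟨⟨threeStackTM main m, Equiv.refl Bool, Equiv.refl Bool⟩, p, fun z => ?_⟩⟩
  show EvalsToInTime (threeStackTM main m).step (initList _ (List.map id z))
    (some (haltList _ (List.map id (eb (f z))))) _
  rw [List.map_id, List.map_id, initList_threeStackTM, haltList_threeStackTM]
  exact (h z).some

end ThreeStack

def pushList {Λ : Type} (k : Fin 3) (l : Str) (q : Stmt3 Λ) : Stmt3 Λ :=
  l.foldr (fun b q => push k (fun _ => b) q) q

theorem stepAux_pushList {Λ : Type} (k : Fin 3) (l : Str) (q : Stmt3 Λ) (v : Option Bool)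
    (S : Fin 3 → Str) :
    TM2.stepAux (pushList k l q) v S =
      TM2.stepAux q v (Function.update S k (l.reverse ++ S k)) := by
  induction l generalizing S with
  | nil => simp [pushList]
  | cons b l ih =>
    simp only [pushList, List.foldr] at ih ⊢
    simp [ih, Function.update_idem]

def popBits {Λ : Type} (short : Stmt3 Λ) : ℕ → (Str → Stmt3 Λ) → Stmt3 Λ
  | 0, k => load (fun _ => none) (k [])
  | n + 1, k => pop 0 (fun _ b => b) (branch Option.isSome
      (branch (·.getD false) (popBits short n (k ∘ (true :: ·)))
        (popBits short n (k ∘ (false :: ·))))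
      short)

section PopBits

variable {Λ : Type} (short : Stmt3 Λ)

theorem stepAux_popBits_of_le {n : ℕ} {w : Str} (hn : n ≤ w.length) (s o : Str)
    (k : Str → Stmt3 Λ) (v : Option Bool) :
    TM2.stepAux (popBits short n k) v (stk3 w s o) =
      TM2.stepAux (k (w.take n)) none (stk3 (w.drop n) s o) := by
  induction w generalizing n k v with
  | nil => cases n with
    | zero => simp [popBits]
    | succ n => simp at hn
  | cons c w ih => cases n with
    | zero => simp [popBits]
    | succ n => cases c <;> simp [popBits, ih (Nat.le_of_succ_le_succ hn)]

theorem stepAux_popBits_of_length_lt {n : ℕ} {w : Str} (hw : w.length < n) (s o : Str)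
    (k : Str → Stmt3 Λ) (v : Option Bool) :
    TM2.stepAux (popBits short n k) v (stk3 w s o) = TM2.stepAux short none (stk3 [] s o) := by
  induction w generalizing n k v with
  | nil => cases n with
    | zero => simp at hw
    | succ n => simp [popBits]
  | cons c w ih => cases n with
    | zero => simp at hw
    | succ n => cases c <;> simp [popBits, ih (Nat.lt_of_succ_lt_succ hw)]

end PopBits

def dropLastOr (w z : Str) : Str := if z = [] then w else z.dropLast

namespace DropLastTM

inductive Label | collect | emit
  deriving DecidableEq

instance : Fintype Label := ⟨{.collect, .emit}, by rintro (_ | _) <;> simp⟩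

-- `collect` reverses the input onto the work stack and drops its top, the last input bit;
-- `emit` reverses the rest onto the output stack.
def prog (w : Str) : Label → Stmt3 Label
  | .collect => pop 0 (fun _ b => b) (branch Option.isSome
      (push 1 (·.getD false) (goto fun _ => .collect))
      (pop 1 (fun _ b => b) (branch Option.isSome (goto fun _ => .emit)
        (pushList 2 w.reverse halt))))
  | .emit => pop 1 (fun _ b => b) (branch Option.isSome
      (push 2 (·.getD false) (goto fun _ => .emit)) halt)

abbrev tm (w : Str) : FinTM2 := threeStackTM .collect (prog w)

theorem reachesWithin_emit (w : Str) (s o : Str) (v : Option Bool) :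
    ReachesWithin (tm w).step (s.length + 1) ⟨some .emit, v, stk3 [] s o⟩
      ⟨none, none, stk3 [] [] (s.reverse ++ o)⟩ := by
  induction s generalizing o v with
  | nil => exact .head (by simp [prog]; rfl) (by simpa using .refl _ _ _)
  | cons b s ih =>
    simpa using ReachesWithin.head (by simp [prog]; rfl) (ih (b :: o) (some b))

theorem reachesWithin_collect (w : Str) (a s : Str) (v : Option Bool) :
    ReachesWithin (tm w).step (2 * a.length + s.length + 2) ⟨some .collect, v, stk3 a s []⟩
      ⟨none, none, stk3 [] []
        (if a.reverse ++ s = [] then w else (a.reverse ++ s).tail.reverse)⟩ := by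
  induction a generalizing s v with
  | nil =>
    cases s with
    | nil => exact .head (by simp [prog, stepAux_pushList]; rfl) (.refl _ _ _)
    | cons b s =>
      simpa using ReachesWithin.head (by simp [prog]; rfl)
        ((reachesWithin_emit w s [] (some b)).mono (by omega))
  | cons b a ih =>
    simpa using (ReachesWithin.head (by simp [prog]; rfl) (ih (b :: s) (some b))).mono
      (by simp; omega)

end DropLastTM

theorem fp_dropLastOr (w : Str) : FP (dropLastOr w) :=
  nonempty_tm2ComputableInPolyTime_of_reachesWithin (2 * .X + 2) fun z => by
    simpa [dropLastOr, List.tail_reverse, strEnc] using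
      DropLastTM.reachesWithin_collect w z [] none

def dbl (x : Str) : Str := x.flatMap fun b => [b, b]

theorem encStr_eq_dbl (x : Str) : encStr x = dbl x ++ [false, true] := by
  induction x <;> simp_all [encStr, dbl]

theorem dbl_append (x y : Str) : dbl (x ++ y) = dbl x ++ dbl y := List.flatMap_append

theorem dbl_append_marker_inj {a b r r' : Str}
    (h : dbl a ++ false :: true :: r = dbl b ++ false :: true :: r') : a = b ∧ r = r' := by
  induction a generalizing b with
  | nil => cases b with
    | nil => simpa [dbl] using h
    | cons c b => cases c <;> simp [dbl] at h
  | cons c a ih => cases b with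
    | nil => cases c <;> simp [dbl] at h
    | cons c' b =>
      simp only [dbl, List.flatMap_cons, List.cons_append, List.nil_append, List.cons.injEq] at h
      obtain ⟨rfl, -, h⟩ := h
      exact (ih h).imp_left (congrArg _)

theorem encodeTuple_pair (z y : Str) :
    encodeTuple [z, y] = dbl z ++ [false, true] ++ dbl y ++ [false, true] := by
  simp [encodeTuple, encStr_eq_dbl]

def revTail (z : Str) : Option Str := if z = [] then none else some z.reverse.tail

theorem revTail_eq_some_iff (z y : Str) : revTail z = some y ↔ ∃ c, z.reverse = c :: y := by
  rcases h : z.reverse with _ | ⟨c, y'⟩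
  · simp_all [revTail]
  · have hz : z ≠ [] := by rintro rfl; simp at h
    simp [revTail, hz, h, eq_comm]

namespace RevTailGraphTM

-- The input `encStr (encodeTuple [z, y]) ++ t` is read in blocks of four bits: every bit of `z`
-- and `y` appears four times, and their end markers become `0011`.
inductive Block | bit (b : Bool) | sep

def Block.code : Block → Str
  | bit b => dbl (dbl [b])
  | sep => dbl [false, true]

def classify (u : Str) : Option Block :=
  if u = (Block.bit false).code then some (.bit false)
  else if u = (Block.bit true).code then some (.bit true)
  else if u = Block.sep.code then some .sep
  else none

theorem classify_eq_some_iff (u : Str) (B : Block) : classify u = some B ↔ u = B.code := by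
  unfold classify
  rcases B with (_ | _) | _ <;> split_ifs <;> simp_all [Block.code, dbl]

-- Reference semantics of the verifier: `collect` pushes the bits of `z` and, at the separator,
-- drops the top of the stack (the last bit of `z`); `compare` pops the rest against the bits of
-- `y`; `final` checks the end marker of the outer `encStr`.
def final : Str → Bool
  | false :: true :: _ => true
  | _ => false

def compare : Str → Str → Bool
  | c₁ :: c₂ :: c₃ :: c₄ :: r, s =>
    match classify [c₁, c₂, c₃, c₄], s with
    | some (.bit c), c' :: s' => c' == c && compare r s'
    | some .sep, [] => final r
    | _, _ => false
  | _, _ => false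

def collect : Str → Str → Bool
  | c₁ :: c₂ :: c₃ :: c₄ :: r, s =>
    match classify [c₁, c₂, c₃, c₄], s with
    | some (.bit c), s => collect r (c :: s)
    | some .sep, _ :: s' => compare r s'
    | _, _ => false
  | _, _ => false

theorem final_eq_true_iff (w : Str) : final w = true ↔ ∃ t, w = false :: true :: t := by
  rcases w with _ | ⟨_ | _, _ | ⟨_ | _, t⟩⟩ <;> simp [final]

theorem compare_eq_true_iff (w s : Str) :
    compare w s = true ↔ ∃ t, w = dbl (dbl s) ++ Block.sep.code ++ false :: true :: t := by
  induction s generalizing w with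
  | nil =>
    rcases w with _ | ⟨c₁, _ | ⟨c₂, _ | ⟨c₃, _ | ⟨c₄, r⟩⟩⟩⟩
    all_goals try (cases c₁ <;> cases c₂ <;> cases c₃ <;> cases c₄)
    all_goals simp [compare, classify, Block.code, dbl, final_eq_true_iff]
  | cons c s ih =>
    rcases w with _ | ⟨c₁, _ | ⟨c₂, _ | ⟨c₃, _ | ⟨c₄, r⟩⟩⟩⟩
    all_goals try (cases c₁ <;> cases c₂ <;> cases c₃ <;> cases c₄)
    all_goals cases c <;> simp [compare, classify, Block.code, dbl, ih]

theorem collect_dbl_dbl_append (z t s : Str) :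
    collect (dbl (dbl z) ++ Block.sep.code ++ t) s =
      match z.reverse ++ s with
      | [] => false
      | _ :: s' => compare t s' := by
  induction z generalizing s with
  | nil => cases s <;> simp [collect, classify, Block.code, dbl]
  | cons c z ih =>
    have hstep : collect (dbl (dbl (c :: z)) ++ Block.sep.code ++ t) s =
        collect (dbl (dbl z) ++ Block.sep.code ++ t) (c :: s) := by
      cases c <;> simp [collect, classify, Block.code, dbl]
    rw [hstep, ih]
    simp

theorem exists_of_collect_eq_true (w s : Str) (h : collect w s = true) :
    ∃ z t, w = dbl (dbl z) ++ Block.sep.code ++ t := by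
  induction hw : w.length using Nat.strong_induction_on generalizing w s with
  | _ n ih =>
    rcases w with _ | ⟨c₁, _ | ⟨c₂, _ | ⟨c₃, _ | ⟨c₄, r⟩⟩⟩⟩
    any_goals simp [collect] at h
    cases hB : classify [c₁, c₂, c₃, c₄] with
    | none => simp [hB] at h
    | some B =>
      have hcode := (classify_eq_some_iff _ _).1 hB
      cases B with
      | bit c =>
        simp only [hB] at h
        obtain ⟨z, t, rfl⟩ := ih r.length (by simp [← hw]; omega) r (c :: s) h rfl
        exact ⟨c :: z, t, by simp_all [Block.code, dbl]⟩
      | sep => exact ⟨[], r, by rw [← hcode]; rfl⟩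

theorem encStr_encodeTuple_pair_append (z y t : Str) :
    encStr (encodeTuple [z, y]) ++ t =
      dbl (dbl z) ++ Block.sep.code ++ (dbl (dbl y) ++ Block.sep.code ++ false :: true :: t) := by
  simp only [encStr_eq_dbl, encodeTuple_pair, dbl_append, List.append_assoc, Block.code]
  rfl

def verify (v : Str) : Bool := collect v []

theorem verify_encStr_append_iff (u t : Str) :
    verify (encStr u ++ t) = true ↔ u ∈ SVGraph revTail := by
  constructor
  · intro h
    obtain ⟨z, t', hw⟩ := exists_of_collect_eq_true _ _ h
    rw [verify, hw, collect_dbl_dbl_append, List.append_nil] at h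
    rcases hz : z.reverse with _ | ⟨c, y⟩
    · simp [hz] at h
    · simp only [hz] at h
      obtain ⟨t'', rfl⟩ := (compare_eq_true_iff _ _).1 h
      rw [← encStr_encodeTuple_pair_append, encStr_eq_dbl, encStr_eq_dbl] at hw
      simp only [List.append_assoc, List.cons_append, List.nil_append] at hw
      exact ⟨z, y, (revTail_eq_some_iff z y).2 ⟨c, hz⟩, (dbl_append_marker_inj hw).1⟩
  · rintro ⟨z, y, hzy, rfl⟩
    obtain ⟨c, hz⟩ := (revTail_eq_some_iff z y).1 hzy
    rw [verify, encStr_encodeTuple_pair_append, collect_dbl_dbl_append, List.append_nil, hz]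
    exact (compare_eq_true_iff _ _).2 ⟨t, rfl⟩

inductive Label | collect | compare | reject | output (b : Bool)
  deriving DecidableEq

instance : Fintype Label :=
  ⟨{.collect, .compare, .reject, .output false, .output true},
    by rintro (_ | _ | _ | ⟨_ | _⟩) <;> simp⟩

def reject : Stmt3 Label := goto fun _ => .reject

def finalCheck : Stmt3 Label :=
  popBits reject 2 fun u => if u = [false, true] then goto fun _ => .output true else reject

def prog : Label → Stmt3 Label
  | .collect => popBits reject 4 fun u => match classify u with
    | some (.bit c) => push 1 (fun _ => c) (goto fun _ => .collect)
    | some .sep => pop 1 (fun _ b => b) (branch Option.isSome (goto fun _ => .compare) reject)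
    | none => reject
  | .compare => popBits reject 4 fun u => match classify u with
    | some (.bit c) => pop 1 (fun _ b => b) (branch (· == some c) (goto fun _ => .compare) reject)
    | some .sep => pop 1 (fun _ b => b) (branch Option.isSome reject finalCheck)
    | none => reject
  -- a halting configuration has all stacks but the output empty, so these two drain them first
  | .reject => pop 1 (fun _ b => b)
      (branch Option.isSome (goto fun _ => .reject) (goto fun _ => .output false))
  | .output b => pop 0 (fun _ b => b)
      (branch Option.isSome (goto fun _ => .output b) (push 2 (fun _ => b) halt))

abbrev tm : FinTM2 := threeStackTM .collect prog

theorem reachesWithin_output (b : Bool) (w : Str) (v : Option Bool) :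
    ReachesWithin tm.step (w.length + 1) ⟨some (.output b), v, stk3 w [] []⟩
      ⟨none, none, stk3 [] [] [b]⟩ := by
  induction w generalizing v with
  | nil => exact .head (by simp [prog]; rfl) (.refl _ _ _)
  | cons c w ih => exact .head (by simp [prog]; rfl) (ih (some c))

theorem reachesWithin_reject (w s : Str) (v : Option Bool) :
    ReachesWithin tm.step (s.length + w.length + 2) ⟨some .reject, v, stk3 w s []⟩
      ⟨none, none, stk3 [] [] [false]⟩ := by
  induction s generalizing v with
  | nil => simpa using .head (by simp [prog]; rfl) (reachesWithin_output false w none)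
  | cons c s ih => simpa [add_right_comm] using .head (by simp [prog]; rfl) (ih (some c))

theorem reachesWithin_of_length_lt {ℓ : Label} {n : ℕ} {k : Str → Stmt3 Label}
    (hℓ : prog ℓ = popBits reject n k) {w : Str} (hw : w.length < n) (s : Str) (v : Option Bool) :
    ReachesWithin tm.step (s.length + 3) ⟨some ℓ, v, stk3 w s []⟩
      ⟨none, none, stk3 [] [] [false]⟩ :=
  .head (by simp [hℓ, stepAux_popBits_of_length_lt _ hw, reject]; rfl)
    (reachesWithin_reject [] s none)

theorem reachesWithin_block {ℓ : Label} {k : Str → Stmt3 Label}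
    (hℓ : prog ℓ = popBits reject 4 k) {c₁ c₂ c₃ c₄ : Bool} {r s : Str} {v : Option Bool}
    {m n : ℕ} {d : tm.Cfg}
    (h : ReachesWithin tm.step m (TM2.stepAux (k [c₁, c₂, c₃, c₄]) none (stk3 r s [])) d)
    (hmn : m + 1 ≤ n) :
    ReachesWithin tm.step n ⟨some ℓ, v, stk3 (c₁ :: c₂ :: c₃ :: c₄ :: r) s []⟩ d :=
  (ReachesWithin.head (by simp [hℓ, stepAux_popBits_of_le]; rfl) h).mono hmn

theorem reachesWithin_finalCheck (r : Str) :
    ReachesWithin tm.step (r.length + 2) (TM2.stepAux finalCheck none (stk3 r [] []))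
      ⟨none, none, stk3 [] [] [final r]⟩ := by
  rcases r with _ | ⟨d₁, _ | ⟨d₂, r⟩⟩
  · simpa [finalCheck, stepAux_popBits_of_length_lt, final, reject] using
      reachesWithin_reject [] [] none
  · simpa [finalCheck, stepAux_popBits_of_length_lt, final, reject] using
      (reachesWithin_reject [] [] none).mono (by simp)
  · cases d₁ <;> cases d₂ <;> simp [finalCheck, stepAux_popBits_of_le, final, reject]
    all_goals first
      | exact (reachesWithin_reject r [] none).mono (by simp)
      | exact (reachesWithin_output true r none).mono (by omega)

theorem reachesWithin_compare (w s : Str) (v : Option Bool) :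
    ReachesWithin tm.step (w.length + s.length + 4) ⟨some .compare, v, stk3 w s []⟩
      ⟨none, none, stk3 [] [] [compare w s]⟩ := by
  induction hw : w.length using Nat.strong_induction_on generalizing w s v with
  | _ n ih =>
  rcases w with _ | ⟨c₁, _ | ⟨c₂, _ | ⟨c₃, _ | ⟨c₄, r⟩⟩⟩⟩
  any_goals
    simpa [compare] using (reachesWithin_of_length_lt rfl (by simp) s v).mono (by omega)
  subst hw
  cases hB : classify [c₁, c₂, c₃, c₄] with
  | none =>
    simp only [compare, hB]
    exact reachesWithin_block rfl (by simp [hB, reject]; exact reachesWithin_reject r s none)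
      (by simp +arith)
  | some B =>
    rcases B with c | _ <;> rcases s with _ | ⟨c', s⟩
    · simp only [compare, hB]
      exact reachesWithin_block rfl (by simp [hB, reject]; exact reachesWithin_reject r [] none)
        (by simp +arith)
    · simp only [compare, hB]
      by_cases hc : c' = c
      · subst hc
        simpa using reachesWithin_block rfl
          (by simp [hB]; exact ih r.length (by simp +arith) r s _ rfl) (by simp +arith)
      · have hc : (c' == c) = false := by simpa using hc
        simpa [hc] using reachesWithin_block rfl
          (by simp [hB, hc, reject]; exact reachesWithin_reject r s _) (by simp +arith)
    · simp only [compare, hB]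
      exact reachesWithin_block rfl (by simp [hB]; exact reachesWithin_finalCheck r)
        (by simp +arith)
    · simp only [compare, hB]
      exact reachesWithin_block rfl (by simp [hB, reject]; exact reachesWithin_reject r s _)
        (by simp +arith)

theorem reachesWithin_collect (w s : Str) (v : Option Bool) :
    ReachesWithin tm.step (w.length + s.length + 6) ⟨some .collect, v, stk3 w s []⟩
      ⟨none, none, stk3 [] [] [collect w s]⟩ := by
  induction hw : w.length using Nat.strong_induction_on generalizing w s v with
  | _ n ih =>
  rcases w with _ | ⟨c₁, _ | ⟨c₂, _ | ⟨c₃, _ | ⟨c₄, r⟩⟩⟩⟩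
  any_goals
    simpa [collect] using (reachesWithin_of_length_lt rfl (by simp) s v).mono (by omega)
  subst hw
  cases hB : classify [c₁, c₂, c₃, c₄] with
  | none =>
    simp only [collect, hB]
    exact reachesWithin_block rfl (by simp [hB, reject]; exact reachesWithin_reject r s none)
      (by simp +arith)
  | some B =>
    rcases B with c | _
    · simp only [collect, hB]
      exact reachesWithin_block rfl
        (by simp [hB]; exact ih r.length (by simp +arith) r (c :: s) _ rfl) (by simp +arith)
    · rcases s with _ | ⟨c', s⟩
      · simp only [collect, hB]
        exact reachesWithin_block rfl (by simp [hB, reject]; exact reachesWithin_reject r [] none)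
          (by simp +arith)
      · simp only [collect, hB]
        exact reachesWithin_block rfl (by simp [hB]; exact reachesWithin_compare r s _)
          (by simp +arith)

end RevTailGraphTM

theorem ptimeRel_verify : PTimeRel fun x _ => RevTailGraphTM.verify (encStr x) := by
  refine ⟨RevTailGraphTM.verify, ?_, fun x l => ?_⟩
  · exact nonempty_tm2ComputableInPolyTime_of_reachesWithin (.X + 6) fun z => by
      simpa [boolEnc, encodingBoolBool, encodeBool, RevTailGraphTM.verify] using
        RevTailGraphTM.reachesWithin_collect z [] none
  · show RevTailGraphTM.verify (encStr x ++ encodeTuple l) = RevTailGraphTM.verify (encStr x)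
    rw [Bool.eq_iff_iff]
    nth_rw 2 [← List.append_nil (encStr x)]
    exact (RevTailGraphTM.verify_encStr_append_iff x _).trans
      (RevTailGraphTM.verify_encStr_append_iff x []).symm

theorem altSat_const (k : ℕ) (b : Bool) (m : ℕ) (c : Prop) : altSat k b m (fun _ => c) ↔ c := by
  induction k generalizing b with
  | zero => cases b <;> rfl
  | succ k ih =>
    cases b <;> simp only [altSat, ih]
    · exact ⟨fun h => h [] (Nat.zero_le m), fun h _ _ => h⟩
    · exact ⟨fun ⟨_, _, h⟩ => h, fun h => ⟨[], Nat.zero_le m, h⟩⟩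

theorem svGraph_revTail_mem_sigmaP (k : ℕ) : SVGraph revTail ∈ SigmaP k :=
  ⟨0, _, ptimeRel_verify, fun x => by
    rw [altSat_const, ← RevTailGraphTM.verify_encStr_append_iff x [], List.append_nil]⟩

theorem sigmaSV_revTail (k : ℕ) : SigmaSV k revTail := by
  refine ⟨⟨.X, fun x y h => ?_⟩, svGraph_revTail_mem_sigmaP k⟩
  obtain ⟨c, hc⟩ := (revTail_eq_some_iff x y).1 h
  have hlen := congrArg List.length hc
  simp only [List.length_reverse, List.length_cons] at hlen
  simp only [Polynomial.eval_X]
  omega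

theorem revTail_dom_infinite : {x | revTail x ≠ none}.Infinite :=
  Set.infinite_of_injective_forall_mem (List.cons_injective (a := true)) fun x => by
    simp [revTail]

theorem not_stronglySigmaImmune_of_mem_iff_dropLast (k : ℕ) {S T : Set Str} (hT : T.Infinite)
    (hS : ∀ z ≠ [], z ∈ S ↔ z.dropLast ∈ T) : ¬ StronglySigmaImmune k S := by
  rintro ⟨-, hstrong⟩
  have hred : QuasiRed k revTail S {y | y.reverse ∈ T} := by
    refine ⟨sigmaSV_revTail k, revTail_dom_infinite, fun x y hxy => ?_⟩
    obtain ⟨c, hc⟩ := (revTail_eq_some_iff x y).1 hxy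
    have hx : x ≠ [] := by rintro rfl; simp at hc
    have hy : y = x.dropLast.reverse := by rw [← List.tail_reverse, hc, List.tail_cons]
    simp [hS x hx, hy]
  refine (hstrong _ _ hred).not_infinite
    ((hT.image (f := fun x => (x ++ [false], x ++ [true])) ?_).mono ?_)
  · exact fun x _ y _ h => by simpa using congrArg Prod.fst h
  · rintro _ ⟨x, hx, rfl⟩
    have hlex : List.Lex (· < ·) (x ++ [false]) (x ++ [true]) :=
      List.Lex.append_left _ (List.Lex.rel (by decide)) x
    simpa [hS, hx, revTail, StrLt] using hlex

theorem exists_notMem_of_stronglySigmaImmune {k : ℕ} {A : Set Str}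
    (hA : StronglySigmaImmune k A) : ∃ w, w ∉ A := by
  by_contra! h
  rw [← Set.eq_univ_iff_forall] at h
  subst h
  exact not_stronglySigmaImmune_of_mem_iff_dropLast k Set.infinite_univ (by simp) hA

def join (A B : Set Str) : Set Str :=
  {z | ∃ x ∈ A, z = x ++ [false]} ∪ {z | ∃ x ∈ B, z = x ++ [true]}

theorem nil_not_mem_join (A B : Set Str) : [] ∉ join A B := by
  rintro (⟨x, -, h⟩ | ⟨x, -, h⟩) <;> simp at h

theorem mem_join_self_iff {A : Set Str} {z : Str} (hz : z ≠ []) :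
    z ∈ join A A ↔ z.dropLast ∈ A := by
  refine ⟨by rintro (⟨x, hx, rfl⟩ | ⟨x, hx, rfl⟩) <;> simpa using hx, fun h => ?_⟩
  rw [← List.dropLast_append_getLast hz] at h ⊢
  cases z.getLast hz
  · exact .inl ⟨_, by simpa using h, rfl⟩
  · exact .inr ⟨_, by simpa using h, rfl⟩

theorem join_infinite_of_left {A : Set Str} (hA : A.Infinite) (B : Set Str) :
    (join A B).Infinite := by
  refine (hA.image (f := (· ++ [false])) fun _ _ _ _ h => List.append_cancel_right h).mono ?_
  rintro _ ⟨x, hx, rfl⟩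
  exact .inl ⟨x, hx, rfl⟩

theorem hPmRed_join_self {A : Set Str} {w : Str} (hw : w ∉ A) : HPmRed (join A A) A := by
  refine ⟨dropLastOr w, fp_dropLastOr w, ⟨.X + 1, fun z => ?_⟩, fun z => ?_⟩ <;>
    rcases eq_or_ne z [] with rfl | hz
  · simp
  · simp [dropLastOr, hz]
    omega
  · simp [dropLastOr, nil_not_mem_join, hw]
  · simp [dropLastOr, hz, mem_join_self_iff hz]

theorem stmt5_general (k : ℕ) (A : Set Str) (hA : StronglySigmaImmune k A) :
    ({z : Str | ∃ x ∈ A, z = x ++ [false]} ∪ {z : Str | ∃ x ∈ A, z = x ++ [true]}).Infinite ∧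
    HPmRed ({z : Str | ∃ x ∈ A, z = x ++ [false]} ∪ {z : Str | ∃ x ∈ A, z = x ++ [true]}) A ∧
    ¬ StronglySigmaImmune k
      ({z : Str | ∃ x ∈ A, z = x ++ [false]} ∪ {z : Str | ∃ x ∈ A, z = x ++ [true]}) := by
  obtain ⟨w, hw⟩ := exists_notMem_of_stronglySigmaImmune hA
  exact ⟨join_infinite_of_left hA.1 A, hPmRed_join_self hw,
    not_stronglySigmaImmune_of_mem_iff_dropLast k hA.1 fun _ => mem_join_self_iff⟩

/-- for a strongly `Σₖᵖ`-immune `A`, the disjoint union `A ⊕ A` is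
infinite and h-P-m-reducible to `A` but not strongly `Σₖᵖ`-immune. -/
theorem stmt5 (k : ℕ) (hk : 1 ≤ k) (A : Set Str) (hA : StronglySigmaImmune k A) :
    ({z : Str | ∃ x ∈ A, z = x ++ [false]} ∪ {z : Str | ∃ x ∈ A, z = x ++ [true]}).Infinite ∧
    HPmRed ({z : Str | ∃ x ∈ A, z = x ++ [false]} ∪ {z : Str | ∃ x ∈ A, z = x ++ [true]}) A ∧
    ¬ StronglySigmaImmune k
      ({z : Str | ∃ x ∈ A, z = x ++ [false]} ∪ {z : Str | ∃ x ∈ A, z = x ++ [true]}) :=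
  stmt5_general k A hA
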